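/- Lower bound on path length from the Diophantine condition (Lemma 3.1): let ω satisfy ‖ωn‖₁ ≥ C₀|n|^{-τ} for all nonzero integers n, and let w₁, w₂ be such that ‖ω x'_{w_i}‖₁ ≤ c v₀^{-1} γ^{h} for i = 1,2 with x'_{w_1} ≠ x'_{w_2} integers, and suppose x'_{w_1} − x'_{w_2} = Δ where |Δ| ≤ 4x̄·m with m the number of vertices in a connecting path and x̄ ≥ 1. Then m ≥ A x̄^{-1} γ^{-h/τ} with A = (C₀ v₀/(2c))^{1/τ}/4. -/

import Mathlib

/-- distance from a real number to the nearest integer -/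
noncomputable def dist1 (t : ℝ) : ℝ := |t - round t|

/-! Two integers whose multiples of `ω` are both within `ε` of an integer have a difference `Δ`
with `‖ωΔ‖₁ ≤ 2ε`; the Diophantine condition `‖ωΔ‖₁ ≥ C₀|Δ|^{-τ}` then forces
`|Δ| ≥ (C₀ / 2ε)^{1/τ}`. With `ε = c v₀⁻¹ γ^h` and `|Δ| ≤ 4 x̄ m` this is the bound on `m`. -/

lemma dist1_sub_le (a b : ℝ) : dist1 (a - b) ≤ dist1 a + dist1 b :=
  calc dist1 (a - b) ≤ |(a - b) - ((round a - round b : ℤ) : ℝ)| := round_le _ _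
    _ = |(a - round a) - (b - round b)| := by push_cast; ring_nf
    _ ≤ dist1 a + dist1 b := abs_sub _ _

lemma rpow_one_div_le_of_mul_rpow_neg_le {C ε N τ : ℝ} (hC : 0 ≤ C) (hε : 0 < ε) (hN : 0 < N)
    (hτ : 0 < τ) (h : C * N ^ (-τ) ≤ ε) : (C / ε) ^ (1 / τ) ≤ N := by
  have hNτ : 0 < N ^ τ := Real.rpow_pos_of_pos hN τ
  rw [Real.rpow_neg hN.le, ← div_eq_mul_inv, div_le_iff₀ hNτ] at h
  rw [one_div, Real.rpow_inv_le_iff_of_pos (div_nonneg hC hε.le) hN.le hτ, div_le_iff₀ hε]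
  linarith

lemma le_abs_sub_of_dist1_le {ω C₀ τ ε : ℝ} (hC₀ : 0 ≤ C₀) (hτ : 0 < τ) (hε : 0 < ε)
    (hdio : ∀ n : ℤ, n ≠ 0 → C₀ * (|n| : ℝ) ^ (-τ) ≤ dist1 (ω * n))
    {x₁ x₂ : ℤ} (hne : x₁ ≠ x₂) (h1 : dist1 (ω * x₁) ≤ ε) (h2 : dist1 (ω * x₂) ≤ ε) :
    (C₀ / (2 * ε)) ^ (1 / τ) ≤ ((|x₁ - x₂| : ℤ) : ℝ) := by
  have hΔ : x₁ - x₂ ≠ 0 := sub_ne_zero.mpr hne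
  have hsmall : C₀ * |((x₁ - x₂ : ℤ) : ℝ)| ^ (-τ) ≤ 2 * ε :=
    calc C₀ * |((x₁ - x₂ : ℤ) : ℝ)| ^ (-τ) ≤ dist1 (ω * (x₁ - x₂ : ℤ)) := hdio _ hΔ
      _ = dist1 (ω * x₁ - ω * x₂) := by rw [Int.cast_sub, mul_sub]
      _ ≤ 2 * ε := by linarith [dist1_sub_le (ω * x₁) (ω * x₂)]
  rw [Int.cast_abs]
  exact rpow_one_div_le_of_mul_rpow_neg_le hC₀ (by positivity)
    (by exact_mod_cast abs_pos.mpr hΔ) hτ hsmall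

lemma div_two_mul_rpow_one_div {C₀ c v₀ γ τ : ℝ} (hC₀ : 0 ≤ C₀) (hc : 0 < c) (hv₀ : 0 < v₀)
    (hγ : 0 < γ) (h : ℝ) :
    (C₀ / (2 * (c * v₀⁻¹ * γ ^ h))) ^ (1 / τ)
      = (C₀ * v₀ / (2 * c)) ^ (1 / τ) * γ ^ (-h / τ) := by
  have hsplit : C₀ / (2 * (c * v₀⁻¹ * γ ^ h)) = C₀ * v₀ / (2 * c) * γ ^ (-h) := by
    rw [Real.rpow_neg hγ.le]
    field_simp
  rw [hsplit, Real.mul_rpow (by positivity) (by positivity), ← Real.rpow_mul hγ.le, mul_one_div]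

theorem stmt19_general (ω C₀ τ c v₀ γ xbar : ℝ)
    (hC₀ : 0 < C₀) (hτ : 0 < τ) (hc : 0 < c) (hv₀ : 0 < v₀) (hγ : 1 < γ) (hxbar : 1 ≤ xbar)
    (hdio : ∀ n : ℤ, n ≠ 0 → C₀ * (|n| : ℝ) ^ (-τ) ≤ dist1 (ω * n))
    (h : ℤ) (x₁ x₂ : ℤ) (hne : x₁ ≠ x₂)
    (h1 : dist1 (ω * x₁) ≤ c * v₀⁻¹ * γ ^ (h : ℝ))
    (h2 : dist1 (ω * x₂) ≤ c * v₀⁻¹ * γ ^ (h : ℝ))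
    (m : ℕ) (hΔ : ((|x₁ - x₂| : ℤ) : ℝ) ≤ 4 * xbar * m) :
    (C₀ * v₀ / (2 * c)) ^ (1/τ) * γ ^ (-(h:ℝ)/τ) / (4 * xbar) ≤ (m : ℝ) := by
  have hγ₀ : 0 < γ := by linarith
  have hε : 0 < c * v₀⁻¹ * γ ^ (h : ℝ) := by positivity
  have hsep := le_abs_sub_of_dist1_le hC₀.le hτ hε hdio hne h1 h2
  rw [div_two_mul_rpow_one_div hC₀.le hc hv₀ hγ₀] at hsep
  rw [div_le_iff₀ (by linarith)]
  linarith [hsep.trans hΔ]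

theorem stmt19 (ω C₀ τ c v₀ γ xbar : ℝ) (hω : Irrational ω)
    (hC₀ : 0 < C₀) (hτ : 0 < τ) (hc : 0 < c) (hv₀ : 0 < v₀) (hγ : 1 < γ) (hxbar : 1 ≤ xbar)
    (hdio : ∀ n : ℤ, n ≠ 0 → C₀ * (|n| : ℝ) ^ (-τ) ≤ dist1 (ω * n))
    (h : ℤ) (hh : h ≤ 0) (x₁ x₂ : ℤ) (hne : x₁ ≠ x₂)
    (h1 : dist1 (ω * x₁) ≤ c * v₀⁻¹ * γ ^ (h : ℝ))
    (h2 : dist1 (ω * x₂) ≤ c * v₀⁻¹ * γ ^ (h : ℝ))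
    (m : ℕ) (hm : 1 ≤ m) (hΔ : ((|x₁ - x₂| : ℤ) : ℝ) ≤ 4 * xbar * m) :
    (C₀ * v₀ / (2 * c)) ^ (1/τ) * γ ^ (-(h:ℝ)/τ) / (4 * xbar) ≤ (m : ℝ) :=
  stmt19_general ω C₀ τ c v₀ γ xbar hC₀ hτ hc hv₀ hγ hxbar hdio h x₁ x₂ hne h1 h2 m hΔ
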